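/- For every y ∈ ℂ \ {0} and every λ ∈ ℂ, P_p(y + y^{−1}; λ) = (a_0 + λ) + Σ_{r=1}^{p} a_r (y^r + y^{−r}). In particular, y ≠ 0 solves the characteristic equation (a_0 + λ) + Σ_{r=1}^{p} a_r (y^r + y^{−r}) = 0 of the recurrence L_p v + λ v = 0 if and only if z = y + y^{−1} is a root of P_p(·; λ). -/

import Mathlib

/-!
With `z = x + y` and `x * y = 1`, the power sums `s n = x ^ n + y ^ n` obey
`s (n + 2) = z * s (n + 1) - s n`. Hence `s n` is a polynomial in `z` (the Dickson polynomial
`D_n(z, 1)`, i.e. Mathlib's `Chebyshev.C n`) whose coefficient `c n j` of `z ^ (n - 2 j)` obeys the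
Pascal-type rule `c (n + 2) (j + 1) = c (n + 1) (j + 1) - c n j`; it is solved by
`c n j = (-1) ^ j * (2 * C(n - j, j) - C(n - j - 1, j))`. For `n = 2 l` and `n = 2 l + 1` these
coefficients, written with the index `k = l - j`, are exactly the summands of `b_{2k}` and
`b_{2k+1}`, so `Σ_r b_r z ^ r` with `z = y + y⁻¹` is `Σ_r a_r (y ^ r + y⁻¹ ^ r)` after
exchanging the order of summation.
-/

/-- Coefficients `b_r(λ)` of the characteristic polynomial `P_p(·;λ)` associated with the
symmetric finite difference stencil `a`. -/
noncomputable def bcoef (p : ℕ) (a : ℤ → ℝ) (lam : ℂ) (r : ℕ) : ℂ :=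
  if r = 0 then
    ((a 0 : ℂ) + lam) + 2 * ∑ l ∈ Finset.Icc 1 (p / 2), (-1 : ℂ) ^ l * (a (2 * l) : ℂ)
  else if r % 2 = 0 then
    ∑ l ∈ Finset.Icc (r / 2) (p / 2),
      (-1 : ℂ) ^ (l - r / 2) * (Nat.choose (l + r / 2 - 1) (2 * (r / 2) - 1) : ℂ) *
        ((l : ℂ) / ((r / 2 : ℕ) : ℂ)) * (a (2 * l) : ℂ)
  else
    ∑ l ∈ Finset.Icc (r / 2) ((p + 1) / 2 - 1),
      (-1 : ℂ) ^ (l - r / 2) * (Nat.choose (l + r / 2) (2 * (r / 2)) : ℂ) *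
        ((2 * (l : ℂ) + 1) / (2 * ((r / 2 : ℕ) : ℂ) + 1)) * (a (2 * l + 1) : ℂ)

/-- The polynomial `P_p(z;λ) = Σ_{r=0}^p b_r(λ) z^r`. -/
noncomputable def Ppoly (p : ℕ) (a : ℤ → ℝ) (lam z : ℂ) : ℂ :=
  ∑ r ∈ Finset.range (p + 1), bcoef p a lam r * z ^ r

open Finset

/-- The coefficient of `z ^ (m - 2 j)` in `Chebyshev.S m z`; recall
`Chebyshev.S m (x + y) = Σ_{i ≤ m} x ^ i * y ^ (m - i)` when `x * y = 1`. -/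
def chebyshevSCoeff (m j : ℕ) : ℤ := (-1) ^ j * ((m - j).choose j : ℤ)

/-- The coefficient of `z ^ (n - 2 j)` in `Chebyshev.C n z = 2 S_n(z) - z S_{n-1}(z)` for `n ≥ 1`.
Both binomials vanish once `n < 2 j`, so no case split is needed there. -/
def chebyshevCCoeff (n j : ℕ) : ℤ := 2 * chebyshevSCoeff n j - chebyshevSCoeff (n - 1) j

lemma chebyshevSCoeff_eq_zero {m j : ℕ} (h : m < 2 * j) : chebyshevSCoeff m j = 0 := by
  rw [chebyshevSCoeff, Nat.choose_eq_zero_of_lt (by omega)]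
  simp

lemma chebyshevSCoeff_add_two (m j : ℕ) :
    chebyshevSCoeff (m + 2) (j + 1) = chebyshevSCoeff (m + 1) (j + 1) - chebyshevSCoeff m j := by
  rcases le_or_gt j m with hjm | hmj
  · obtain ⟨d, rfl⟩ := Nat.exists_eq_add_of_le hjm
    simp only [chebyshevSCoeff, show j + d + 2 - (j + 1) = d + 1 by omega,
      show j + d + 1 - (j + 1) = d by omega, Nat.add_sub_cancel_left, Nat.choose_succ_succ']
    push_cast
    ring
  · rw [chebyshevSCoeff_eq_zero (by omega), chebyshevSCoeff_eq_zero (by omega),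
      chebyshevSCoeff_eq_zero (by omega), sub_zero]

lemma chebyshevCCoeff_eq_zero {n j : ℕ} (h : n < 2 * j) : chebyshevCCoeff n j = 0 := by
  rw [chebyshevCCoeff, chebyshevSCoeff_eq_zero h, chebyshevSCoeff_eq_zero (by omega)]
  simp

lemma chebyshevCCoeff_zero (n : ℕ) : chebyshevCCoeff n 0 = 1 := by
  simp [chebyshevCCoeff, chebyshevSCoeff]

lemma chebyshevCCoeff_add_two {n : ℕ} (hn : 1 ≤ n) (j : ℕ) :
    chebyshevCCoeff (n + 2) (j + 1) = chebyshevCCoeff (n + 1) (j + 1) - chebyshevCCoeff n j := by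
  obtain ⟨m, rfl⟩ := Nat.exists_eq_add_of_le' hn
  simp only [chebyshevCCoeff, Nat.add_sub_cancel, chebyshevSCoeff_add_two]
  rw [show m + 1 + 2 - 1 = m + 2 by omega, chebyshevSCoeff_add_two]
  ring

lemma chebyshevCCoeff_mul_pow_succ {R : Type*} [CommRing R] (n j : ℕ) (z : R) :
    (chebyshevCCoeff n j : R) * z ^ (n + 1 - 2 * j) =
      chebyshevCCoeff n j * z ^ (n - 2 * j) * z := by
  rcases le_or_gt (2 * j) n with h | h
  · rw [mul_assoc, ← pow_succ, Nat.sub_add_comm h]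
  · simp [chebyshevCCoeff_eq_zero h]

theorem pow_add_pow_eq_sum_chebyshevCCoeff {R : Type*} [CommRing R] {x y : R} (hxy : x * y = 1)
    {n : ℕ} (hn : 1 ≤ n) {N : ℕ} (hN : n < 2 * N) :
    x ^ n + y ^ n = ∑ j ∈ range N, (chebyshevCCoeff n j : R) * (x + y) ^ (n - 2 * j) := by
  obtain ⟨n, rfl⟩ := Nat.exists_eq_add_of_le' hn
  induction n using Nat.twoStepInduction generalizing N with
  | zero =>
    obtain ⟨M, rfl⟩ : ∃ M, N = M + 1 := ⟨N - 1, by omega⟩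
    rw [sum_range_succ', sum_eq_zero fun j _ => by rw [chebyshevCCoeff_eq_zero (by omega)]; simp,
      chebyshevCCoeff_zero]
    norm_num
  | one =>
    obtain ⟨M, rfl⟩ : ∃ M, N = M + 2 := ⟨N - 2, by omega⟩
    rw [sum_range_succ', sum_range_succ',
      sum_eq_zero fun j _ => by rw [chebyshevCCoeff_eq_zero (by omega)]; simp]
    rw [chebyshevCCoeff_zero, show chebyshevCCoeff 2 1 = -2 by decide]
    norm_num
    linear_combination (-2) * hxy
  | more n ih₁ ih₂ =>
    obtain ⟨M, rfl⟩ : ∃ M, N = M + 1 := ⟨N - 1, by omega⟩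
    have hrec : x ^ (n + 2 + 1) + y ^ (n + 2 + 1) =
        (x + y) * (x ^ (n + 1 + 1) + y ^ (n + 1 + 1)) - (x ^ (n + 1) + y ^ (n + 1)) := by
      linear_combination (-(x ^ (n + 1) + y ^ (n + 1))) * hxy
    rw [hrec, ih₂ (N := M + 1) (by omega) (by omega), ih₁ (N := M) (by omega) (by omega),
      mul_sum, sum_range_succ', sum_range_succ', add_sub_right_comm, ← sum_sub_distrib]
    congr 1
    · refine sum_congr rfl fun j _ => ?_
      rw [show n + 2 + 1 = n + 1 + 1 + 1 from rfl, chebyshevCCoeff_add_two (n := n + 1) (by omega),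
        Int.cast_sub, sub_mul, chebyshevCCoeff_mul_pow_succ,
        show n + 1 + 1 + 1 - 2 * (j + 1) = n + 1 - 2 * j by omega]
      ring
    · rw [chebyshevCCoeff_zero, chebyshevCCoeff_zero, mul_zero, Nat.sub_zero, Nat.sub_zero]
      ring

lemma chebyshevCCoeff_two_mul_self {l : ℕ} (hl : 1 ≤ l) :
    chebyshevCCoeff (2 * l) l = 2 * (-1) ^ l := by
  rw [chebyshevCCoeff, chebyshevSCoeff_eq_zero (m := 2 * l - 1) (by omega), chebyshevSCoeff,
    show 2 * l - l = l by omega, Nat.choose_self]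
  ring

section
variable {K : Type*} [Field K] [CharZero K]

lemma chebyshevCCoeff_two_mul {k l : ℕ} (hk : 1 ≤ k) (hkl : k ≤ l) :
    (chebyshevCCoeff (2 * l) (l - k) : K) =
      (-1) ^ (l - k) * ((l + k - 1).choose (2 * k - 1) : K) * ((l : K) / (k : K)) := by
  obtain ⟨m, rfl⟩ := Nat.exists_eq_add_of_le' hk
  obtain ⟨d, rfl⟩ := Nat.exists_eq_add_of_le hkl
  have hchoose := Nat.add_one_mul_choose_eq (d + 2 * m + 1) (2 * m + 1)
  rw [show d + 2 * m + 1 + 1 = d + 2 * (m + 1) by ring] at hchoose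
  simp only [chebyshevCCoeff, chebyshevSCoeff, Nat.add_sub_cancel_left,
    show 2 * (m + 1 + d) - d = d + 2 * (m + 1) by omega,
    show 2 * (m + 1 + d) - 1 - d = d + (2 * m + 1) by omega,
    show m + 1 + d + (m + 1) - 1 = d + (2 * m + 1) by omega,
    show 2 * (m + 1) - 1 = 2 * m + 1 by omega]
  rw [Nat.choose_symm_add, Nat.choose_symm_add]
  have hchoose' : ((d + 2 * m + 1 + 1 : ℕ) : K) * ((d + (2 * m + 1)).choose (2 * m + 1) : K) =
      ((d + 2 * (m + 1)).choose (2 * (m + 1)) : K) * ((2 * m + 1 + 1 : ℕ) : K) := by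
    exact_mod_cast hchoose
  push_cast at hchoose' ⊢
  field_simp
  linear_combination -hchoose'

lemma chebyshevCCoeff_two_mul_add_one {k l : ℕ} (hkl : k ≤ l) :
    (chebyshevCCoeff (2 * l + 1) (l - k) : K) =
      (-1) ^ (l - k) * ((l + k).choose (2 * k) : K) * ((2 * (l : K) + 1) / (2 * (k : K) + 1)) := by
  obtain ⟨d, rfl⟩ := Nat.exists_eq_add_of_le hkl
  have hchoose := Nat.add_one_mul_choose_eq (d + 2 * k) (2 * k)
  simp only [chebyshevCCoeff, chebyshevSCoeff, Nat.add_sub_cancel_left, Nat.add_sub_cancel,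
    show 2 * (k + d) + 1 - d = d + (2 * k + 1) by omega,
    show 2 * (k + d) - d = d + 2 * k by omega,
    show k + d + k = d + 2 * k by omega]
  rw [Nat.choose_symm_add, Nat.choose_symm_add]
  have hchoose' : ((d + 2 * k + 1 : ℕ) : K) * ((d + 2 * k).choose (2 * k) : K) =
      ((d + 2 * k + 1).choose (2 * k + 1) : K) * ((2 * k + 1 : ℕ) : K) := by
    exact_mod_cast hchoose
  have h2k : (2 * (k : K) + 1) ≠ 0 := by exact_mod_cast (show 2 * k + 1 ≠ 0 by omega)
  rw [show d + (2 * k + 1) = d + 2 * k + 1 by ring]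
  push_cast at hchoose' ⊢
  field_simp
  linear_combination -2 * hchoose'

lemma pow_two_mul_add_pow_two_mul {x y : K} (hxy : x * y = 1) {l : ℕ} (hl : 1 ≤ l) :
    x ^ (2 * l) + y ^ (2 * l) = 2 * (-1) ^ l + ∑ k ∈ Icc 1 l,
      (-1) ^ (l - k) * ((l + k - 1).choose (2 * k - 1) : K) * ((l : K) / (k : K)) *
        (x + y) ^ (2 * k) := by
  rw [pow_add_pow_eq_sum_chebyshevCCoeff hxy (N := l + 1) (by omega) (by omega),
    ← sum_range_reflect, sum_range_eq_add_Ico _ (by omega), Ico_add_one_right_eq_Icc]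
  congr 1
  · simp [chebyshevCCoeff_two_mul_self hl]
  · refine sum_congr rfl fun k hk => ?_
    obtain ⟨hk1, hkl⟩ := mem_Icc.mp hk
    rw [show l + 1 - 1 - k = l - k by omega, show 2 * l - 2 * (l - k) = 2 * k by omega,
      chebyshevCCoeff_two_mul hk1 hkl]

lemma pow_two_mul_add_one_add_pow_two_mul_add_one {x y : K} (hxy : x * y = 1) (l : ℕ) :
    x ^ (2 * l + 1) + y ^ (2 * l + 1) = ∑ k ∈ range (l + 1),
      (-1) ^ (l - k) * ((l + k).choose (2 * k) : K) * ((2 * (l : K) + 1) / (2 * (k : K) + 1)) *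
        (x + y) ^ (2 * k + 1) := by
  rw [pow_add_pow_eq_sum_chebyshevCCoeff hxy (N := l + 1) (by omega) (by omega),
    ← sum_range_reflect]
  refine sum_congr rfl fun k hk => ?_
  have hkl : k ≤ l := Nat.lt_succ_iff.mp (mem_range.mp hk)
  rw [show l + 1 - 1 - k = l - k by omega, show 2 * l + 1 - 2 * (l - k) = 2 * k + 1 by omega,
    chebyshevCCoeff_two_mul_add_one hkl]

end

lemma sum_Icc_one_eq_sum_even_add_sum_odd {M : Type*} [AddCommMonoid M] (f : ℕ → M) (p : ℕ) :
    ∑ r ∈ Icc 1 p, f r =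
      ∑ l ∈ Icc 1 (p / 2), f (2 * l) + ∑ l ∈ range ((p + 1) / 2), f (2 * l + 1) := by
  induction p with
  | zero => simp
  | succ p ih =>
    rw [sum_Icc_succ_top (by omega), ih]
    obtain ⟨m, rfl | rfl⟩ := Nat.even_or_odd' p
    · rw [show (2 * m + 1 + 1) / 2 = m + 1 by omega, show (2 * m + 1) / 2 = m by omega,
        show 2 * m / 2 = m by omega, sum_range_succ, add_assoc]
    · rw [show (2 * m + 1 + 1 + 1) / 2 = m + 1 by omega, show (2 * m + 1 + 1) / 2 = m + 1 by omega,
        show (2 * m + 1) / 2 = m by omega, sum_Icc_succ_top (by omega),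
        show 2 * (m + 1) = 2 * m + 1 + 1 by ring, add_right_comm]

lemma bcoef_zero (p : ℕ) (a : ℤ → ℝ) (lam : ℂ) :
    bcoef p a lam 0 =
      ((a 0 : ℂ) + lam) + 2 * ∑ l ∈ Icc 1 (p / 2), (-1 : ℂ) ^ l * (a (2 * l) : ℂ) :=
  if_pos rfl

lemma bcoef_two_mul (p : ℕ) (a : ℤ → ℝ) (lam : ℂ) {k : ℕ} (hk : 1 ≤ k) :
    bcoef p a lam (2 * k) = ∑ l ∈ Icc k (p / 2),
      (-1 : ℂ) ^ (l - k) * ((l + k - 1).choose (2 * k - 1) : ℂ) * ((l : ℂ) / (k : ℂ)) *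
        (a (2 * l) : ℂ) := by
  rw [bcoef, if_neg (by omega), if_pos (by omega), Nat.mul_div_cancel_left k two_pos]

lemma bcoef_two_mul_add_one (p : ℕ) (a : ℤ → ℝ) (lam : ℂ) (k : ℕ) :
    bcoef p a lam (2 * k + 1) = ∑ l ∈ Icc k ((p + 1) / 2 - 1),
      (-1 : ℂ) ^ (l - k) * ((l + k).choose (2 * k) : ℂ) *
        ((2 * (l : ℂ) + 1) / (2 * (k : ℂ) + 1)) * (a (2 * l + 1) : ℂ) := by
  rw [bcoef, if_neg (by omega), if_neg (by omega), show (2 * k + 1) / 2 = k by omega]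

lemma bcoef_zero_add_sum_bcoef_two_mul (p : ℕ) (a : ℤ → ℝ) (lam : ℂ) {y : ℂ}
    (hy : y ≠ 0) :
    bcoef p a lam 0 + ∑ k ∈ Icc 1 (p / 2), bcoef p a lam (2 * k) * (y + y⁻¹) ^ (2 * k) =
      ((a 0 : ℂ) + lam) +
        ∑ l ∈ Icc 1 (p / 2), (a (2 * l) : ℂ) * (y ^ (2 * l) + y⁻¹ ^ (2 * l)) := by
  have hswap : ∑ k ∈ Icc 1 (p / 2), bcoef p a lam (2 * k) * (y + y⁻¹) ^ (2 * k) =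
      ∑ l ∈ Icc 1 (p / 2), ∑ k ∈ Icc 1 l, (a (2 * l) : ℂ) * ((-1 : ℂ) ^ (l - k) *
        ((l + k - 1).choose (2 * k - 1) : ℂ) * ((l : ℂ) / (k : ℂ)) *
          (y + y⁻¹) ^ (2 * k)) := by
    rw [sum_comm' (t' := Icc 1 (p / 2)) (s' := fun k => Icc k (p / 2))
      fun l k => by simp only [mem_Icc]; omega]
    refine sum_congr rfl fun k hk => ?_
    rw [bcoef_two_mul p a lam (mem_Icc.mp hk).1, sum_mul]
    exact sum_congr rfl fun l _ => by ring
  rw [bcoef_zero, hswap, add_assoc, mul_sum, ← sum_add_distrib]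
  congr 1
  refine sum_congr rfl fun l hl => ?_
  rw [pow_two_mul_add_pow_two_mul (mul_inv_cancel₀ hy) (mem_Icc.mp hl).1, mul_add, mul_sum]
  ring

lemma sum_bcoef_two_mul_add_one (p : ℕ) (a : ℤ → ℝ) (lam : ℂ) {y : ℂ} (hy : y ≠ 0) :
    ∑ k ∈ range ((p + 1) / 2), bcoef p a lam (2 * k + 1) * (y + y⁻¹) ^ (2 * k + 1) =
      ∑ l ∈ range ((p + 1) / 2),
        (a (2 * l + 1) : ℂ) * (y ^ (2 * l + 1) + y⁻¹ ^ (2 * l + 1)) := by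
  have hswap :
      ∑ k ∈ range ((p + 1) / 2), bcoef p a lam (2 * k + 1) * (y + y⁻¹) ^ (2 * k + 1) =
        ∑ l ∈ range ((p + 1) / 2), ∑ k ∈ range (l + 1), (a (2 * l + 1) : ℂ) *
          ((-1 : ℂ) ^ (l - k) * ((l + k).choose (2 * k) : ℂ) *
            ((2 * (l : ℂ) + 1) / (2 * (k : ℂ) + 1)) * (y + y⁻¹) ^ (2 * k + 1)) := by
    rw [sum_comm' (t' := range ((p + 1) / 2)) (s' := fun k => Icc k ((p + 1) / 2 - 1))
      fun l k => by simp only [mem_Icc, mem_range]; omega]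
    refine sum_congr rfl fun k _ => ?_
    rw [bcoef_two_mul_add_one, sum_mul]
    exact sum_congr rfl fun l _ => by ring
  rw [hswap]
  refine sum_congr rfl fun l _ => ?_
  rw [pow_two_mul_add_one_add_pow_two_mul_add_one (mul_inv_cancel₀ hy), mul_sum]

theorem stmt2_general (p : ℕ) (a : ℤ → ℝ)
    (y : ℂ) (hy : y ≠ 0) (lam : ℂ) :
    (Ppoly p a lam (y + y⁻¹) =
      ((a 0 : ℂ) + lam) +
        ∑ r ∈ Finset.Icc 1 p, (a r : ℂ) * (y ^ (r : ℤ) + y ^ (-(r : ℤ)))) ∧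
    ((((a 0 : ℂ) + lam) +
        ∑ r ∈ Finset.Icc 1 p, (a r : ℂ) * (y ^ (r : ℤ) + y ^ (-(r : ℤ))) = 0) ↔
      Ppoly p a lam (y + y⁻¹) = 0) := by
  have hP : Ppoly p a lam (y + y⁻¹) =
      ((a 0 : ℂ) + lam) +
        ∑ r ∈ Icc 1 p, (a r : ℂ) * (y ^ (r : ℤ) + y ^ (-(r : ℤ))) := by
    simp only [zpow_neg, zpow_natCast, ← inv_pow]
    rw [Ppoly, sum_range_eq_add_Ico _ (by omega), Ico_add_one_right_eq_Icc, pow_zero, mul_one,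
      sum_Icc_one_eq_sum_even_add_sum_odd _ p, ← add_assoc,
      bcoef_zero_add_sum_bcoef_two_mul p a lam hy, sum_bcoef_two_mul_add_one p a lam hy,
      sum_Icc_one_eq_sum_even_add_sum_odd _ p, add_assoc]
    simp only [Nat.cast_mul, Nat.cast_ofNat, Nat.cast_add, Nat.cast_one]
  exact ⟨hP, by rw [hP]⟩

/-- substituting `z = y + y⁻¹` in `P_p(·;λ)` recovers the characteristic
equation of the recurrence `L_p v + λ v = 0`. -/
theorem stmt2 (p : ℕ) (hp : 1 ≤ p) (h : ℝ) (hh : 0 < h)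
    (a : ℤ → ℝ) (hsym : ∀ r : ℤ, a (-r) = a r)
    (y : ℂ) (hy : y ≠ 0) (lam : ℂ) :
    (Ppoly p a lam (y + y⁻¹) =
      ((a 0 : ℂ) + lam) +
        ∑ r ∈ Finset.Icc 1 p, (a r : ℂ) * (y ^ (r : ℤ) + y ^ (-(r : ℤ)))) ∧
    ((((a 0 : ℂ) + lam) +
        ∑ r ∈ Finset.Icc 1 p, (a r : ℂ) * (y ^ (r : ℤ) + y ^ (-(r : ℤ))) = 0) ↔
      Ppoly p a lam (y + y⁻¹) = 0) :=
  stmt2_general p a y hy lam
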